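/- Under Assumption 2 with γ := C/(1−ρ) > 1, let V̄ > 0, ρ_γ := (γ−1)/γ, γ̲ := min{γ, V̄/ε}, and N₀ := ⌈max{0, (V̄ − γε)/ε}⌉. Let x₀ ∈ ℝⁿ with V_{∞,0}(x₀) ≤ V̄ and let x_∞(·), u_∞(·) be an infinite-horizon optimal trajectory from x₀, i.e. an admissible pair with V_{∞,0}(x₀) = Σ_{k=0}^{∞} ℓ(x_∞(k), u_∞(k)). Then for every N ≥ N₀, the infinite-horizon tail cost satisfies V_{∞,0}(x_∞(N)) ≤ ρ_γ^{N−N₀} · min{γ̲ · ε, V_{∞,0}(x₀)}. -/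

import Mathlib

open Finset Filter
open scoped ENNReal

noncomputable section

open scoped Classical

/-- State/input spaces are Euclidean spaces. -/
abbrev Vec (n : ℕ) := EuclideanSpace ℝ (Fin n)

/-- Open-loop state trajectory: `x(0) = x`, `x(k+1) = f(x(k), u(k))`. -/
def traj {n m : ℕ} (f : Vec n → Vec m → Vec n) (x : Vec n) (u : ℕ → Vec m) : ℕ → Vec n
  | 0 => x
  | k + 1 => f (traj f x u k) (u k)

/-- Closed-loop state trajectory under the feedback `κ` (the map `φ_x(·, x)`). -/
def phiX {n m : ℕ} (f : Vec n → Vec m → Vec n) (κ : Vec n → Vec m) (x : Vec n) : ℕ → Vec n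
  | 0 => x
  | k + 1 => f (phiX f κ x k) (κ (phiX f κ x k))

/-- `ℓ_min(x) := inf_{u ∈ U} ℓ(x, u)`. -/
def lmin {n m : ℕ} (ℓ : Vec n → Vec m → ℝ) (Uset : Set (Vec m)) (x : Vec n) : ℝ :=
  sInf ((fun u => ℓ x u) '' Uset)

/-- Finite-tail cost `V_{f,M}(x)`: sum of the stage cost along the κ-closed loop if the
constraints are satisfied along the tail, and `+∞` otherwise (for `M = 0` it equals `0`). -/
def Vtail {n m : ℕ} (f : Vec n → Vec m → Vec n) (κ : Vec n → Vec m)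
    (ℓ : Vec n → Vec m → ℝ) (Z : Set (Vec n × Vec m)) (M : ℕ) (x : Vec n) : ℝ≥0∞ :=
  if ∀ k < M, (phiX f κ x k, κ (phiX f κ x k)) ∈ Z then
    ENNReal.ofReal (∑ k ∈ Finset.range M, ℓ (phiX f κ x k) (κ (phiX f κ x k)))
  else ⊤

/-- Feasibility of the input sequence `u` over horizon `N` from state `x`. -/
def Feasible {n m : ℕ} (f : Vec n → Vec m → Vec n) (Z : Set (Vec n × Vec m))
    (Uset : Set (Vec m)) (N : ℕ) (x : Vec n) (u : ℕ → Vec m) : Prop :=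
  ∀ k < N, u k ∈ Uset ∧ (traj f x u k, u k) ∈ Z

/-- MPC open-loop cost `J_{N,M}` of the input sequence `u` from state `x`. -/
def Jcost {n m : ℕ} (f : Vec n → Vec m → Vec n) (κ : Vec n → Vec m)
    (ℓ : Vec n → Vec m → ℝ) (Z : Set (Vec n × Vec m)) (N M : ℕ) (x : Vec n)
    (u : ℕ → Vec m) : ℝ≥0∞ :=
  ENNReal.ofReal (∑ k ∈ Finset.range N, ℓ (traj f x u k) (u k)) +
    Vtail f κ ℓ Z M (traj f x u N)

/-- MPC value function `V_{N,M}(x)` (equal to `+∞` if the problem is infeasible). -/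
def Vmpc {n m : ℕ} (f : Vec n → Vec m → Vec n) (κ : Vec n → Vec m)
    (ℓ : Vec n → Vec m → ℝ) (Z : Set (Vec n × Vec m)) (Uset : Set (Vec m))
    (N M : ℕ) (x : Vec n) : ℝ≥0∞ :=
  ⨅ (u : ℕ → Vec m) (_ : Feasible f Z Uset N x u), Jcost f κ ℓ Z N M x u

/-- `u` is a minimizing (optimal) input sequence for `V_{N,M}(x)`. -/
def IsMinimizer {n m : ℕ} (f : Vec n → Vec m → Vec n) (κ : Vec n → Vec m)
    (ℓ : Vec n → Vec m → ℝ) (Z : Set (Vec n × Vec m)) (Uset : Set (Vec m))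
    (N M : ℕ) (x : Vec n) (u : ℕ → Vec m) : Prop :=
  Feasible f Z Uset N x u ∧ Vmpc f κ ℓ Z Uset N M x = Jcost f κ ℓ Z N M x u

/-- Infinite-horizon optimal cost `V_{∞,0}(x)`. -/
def Vinf {n m : ℕ} (f : Vec n → Vec m → Vec n) (ℓ : Vec n → Vec m → ℝ)
    (Z : Set (Vec n × Vec m)) (Uset : Set (Vec m)) (x : Vec n) : ℝ≥0∞ :=
  ⨅ (u : ℕ → Vec m) (_ : ∀ k, u k ∈ Uset ∧ (traj f x u k, u k) ∈ Z),
    ∑' k : ℕ, ENNReal.ofReal (ℓ (traj f x u k) (u k))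

/-- Assumption 2 (locally stabilizing controller): exponential decay of the stage
cost along the κ-closed loop and constraint satisfaction, locally (`ℓ_min(x) ≤ ε`). -/
def Assumption2 {n m : ℕ} (f : Vec n → Vec m → Vec n) (κ : Vec n → Vec m)
    (ℓ : Vec n → Vec m → ℝ) (Z : Set (Vec n × Vec m)) (Uset : Set (Vec m))
    (ρ C ε : ℝ) : Prop :=
  ρ ∈ Set.Ico (0 : ℝ) 1 ∧ 1 ≤ C ∧ 0 < ε ∧
    ∀ x : Vec n, lmin ℓ Uset x ≤ ε → ∀ k : ℕ,
      ℓ (phiX f κ x k) (κ (phiX f κ x k)) ≤ C * ρ ^ k * lmin ℓ Uset x ∧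
      (phiX f κ x k, κ (phiX f κ x k)) ∈ Z

/-- A class-`K∞` function: continuous, strictly increasing and unbounded on `[0,∞)`
with `α(0) = 0`. -/
def IsKInfty (α : ℝ → ℝ) : Prop :=
  ContinuousOn α (Set.Ici 0) ∧ StrictMonoOn α (Set.Ici 0) ∧ α 0 = 0 ∧
    Tendsto α atTop atTop

/-! Along an optimal trajectory the dynamic programming principle gives
`V(x(k+1)) = V(x(k)) - ℓ(x(k), u(k))`, while Assumption 2 gives `V(x(k)) ≤ γ ℓ(x(k), u(k))`
whenever `ℓ(x(k), u(k)) ≤ ε`. So as long as `V(x(k)) > γ ε` the stage cost exceeds `ε` and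
`V` drops by more than `ε` per step, which brings it below `γ ε` by time `N₀`; from then on
`ℓ(x(k), u(k)) ≥ V(x(k)) / γ`, so `V` contracts by the factor `1 - 1/γ` at every step. -/

section Trajectory

variable {n m : ℕ} {f : Vec n → Vec m → Vec n}

lemma traj_congr {x : Vec n} {u v : ℕ → Vec m} {j : ℕ} (h : ∀ i < j, u i = v i) :
    traj f x u j = traj f x v j := by
  induction j with
  | zero => rfl
  | succ j ih => rw [traj, traj, ih fun i hi => h i (by omega), h j (by omega)]

lemma traj_add (x : Vec n) (u : ℕ → Vec m) (k j : ℕ) :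
    traj f (traj f x u k) (fun i => u (i + k)) j = traj f x u (j + k) := by
  induction j with
  | zero => simp [traj]
  | succ j ih => rw [traj, ih, Nat.succ_add, traj]

lemma traj_phiX (κ : Vec n → Vec m) (x : Vec n) (k : ℕ) :
    traj f x (fun j => κ (phiX f κ x j)) k = phiX f κ x k := by
  induction k with
  | zero => rfl
  | succ k ih => rw [traj, ih, phiX]

end Trajectory

section ValueFunction

variable {n m : ℕ} {f : Vec n → Vec m → Vec n} {ℓ : Vec n → Vec m → ℝ}
  {Z : Set (Vec n × Vec m)} {Uset : Set (Vec m)}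

lemma lmin_nonneg (hℓ0 : ∀ x u, 0 ≤ ℓ x u) (x : Vec n) : 0 ≤ lmin ℓ Uset x :=
  Real.sInf_nonneg (by rintro _ ⟨u, -, rfl⟩; exact hℓ0 x u)

lemma lmin_le (hℓ0 : ∀ x u, 0 ≤ ℓ x u) (x : Vec n) {u : Vec m} (hu : u ∈ Uset) :
    lmin ℓ Uset x ≤ ℓ x u :=
  csInf_le ⟨0, by rintro _ ⟨v, -, rfl⟩; exact hℓ0 x v⟩ ⟨u, hu, rfl⟩

lemma Vinf_le_tsum {x : Vec n} {u : ℕ → Vec m}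
    (hadm : ∀ k, u k ∈ Uset ∧ (traj f x u k, u k) ∈ Z) :
    Vinf f ℓ Z Uset x ≤ ∑' k, ENNReal.ofReal (ℓ (traj f x u k) (u k)) :=
  iInf₂_le u hadm

lemma Vinf_traj_le_tsum_tail {x : Vec n} {u : ℕ → Vec m}
    (hadm : ∀ k, u k ∈ Uset ∧ (traj f x u k, u k) ∈ Z) (k : ℕ) :
    Vinf f ℓ Z Uset (traj f x u k) ≤
      ∑' j, ENNReal.ofReal (ℓ (traj f x u (j + k)) (u (j + k))) := by
  have := Vinf_le_tsum (ℓ := ℓ) (x := traj f x u k) (u := fun j => u (j + k)) fun j => by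
    rw [traj_add]
    exact hadm (j + k)
  simpa only [traj_add] using this

lemma Vinf_le_sum_add_Vinf_traj {x : Vec n} {u : ℕ → Vec m} {k : ℕ}
    (hadm : ∀ i < k, u i ∈ Uset ∧ (traj f x u i, u i) ∈ Z) :
    Vinf f ℓ Z Uset x ≤ ∑ i ∈ range k, ENNReal.ofReal (ℓ (traj f x u i) (u i)) +
      Vinf f ℓ Z Uset (traj f x u k) := by
  conv_rhs => rw [Vinf]
  simp only [ENNReal.add_iInf]
  refine le_iInf₂ fun w hw => ?_
  set v : ℕ → Vec m := fun i => if i < k then u i else w (i - k)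
  have hv_pre : ∀ i < k, v i = u i := fun i hi => if_pos hi
  have hv_post : ∀ j, v (j + k) = w j := fun j => by simp [v]
  have htraj_pre : ∀ j ≤ k, traj f x v j = traj f x u j := fun j hj =>
    traj_congr fun i hi => hv_pre i (by omega)
  have htraj_post : ∀ j, traj f x v (j + k) = traj f (traj f x u k) w j := fun j => by
    rw [← traj_add, htraj_pre k le_rfl]
    simp only [hv_post]
  have hvadm : ∀ i, v i ∈ Uset ∧ (traj f x v i, v i) ∈ Z := by
    intro i
    rcases lt_or_ge i k with hi | hi
    · rw [hv_pre i hi, htraj_pre i hi.le]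
      exact hadm i hi
    · obtain ⟨j, rfl⟩ := Nat.exists_eq_add_of_le' hi
      rw [hv_post, htraj_post]
      exact hw j
  calc Vinf f ℓ Z Uset x ≤ ∑' i, ENNReal.ofReal (ℓ (traj f x v i) (v i)) := Vinf_le_tsum hvadm
    _ = ∑ i ∈ range k, ENNReal.ofReal (ℓ (traj f x v i) (v i)) +
          ∑' j, ENNReal.ofReal (ℓ (traj f x v (j + k)) (v (j + k))) :=
        (ENNReal.summable.sum_add_tsum_nat_add').symm
    _ = _ := by
        congr 1
        · refine sum_congr rfl fun i hi => ?_
          rw [hv_pre i (mem_range.mp hi), htraj_pre i (mem_range.mp hi).le]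
        · simp only [htraj_post, hv_post]

variable {x₀ : Vec n} {u : ℕ → Vec m}

lemma Vinf_traj_eq_tsum_tail_of_optimal (hadm : ∀ k, u k ∈ Uset ∧ (traj f x₀ u k, u k) ∈ Z)
    (hopt : Vinf f ℓ Z Uset x₀ = ∑' k, ENNReal.ofReal (ℓ (traj f x₀ u k) (u k))) (k : ℕ) :
    Vinf f ℓ Z Uset (traj f x₀ u k) =
      ∑' j, ENNReal.ofReal (ℓ (traj f x₀ u (j + k)) (u (j + k))) := by
  refine le_antisymm (Vinf_traj_le_tsum_tail hadm k) ?_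
  have h := Vinf_le_sum_add_Vinf_traj (ℓ := ℓ) fun i (_ : i < k) => hadm i
  rw [hopt, ← ENNReal.summable.sum_add_tsum_nat_add' (k := k)] at h
  exact (ENNReal.add_le_add_iff_left (ENNReal.sum_ne_top.2 fun _ _ => ENNReal.ofReal_ne_top)).1 h

lemma Vinf_traj_eq_add_Vinf_traj_succ_of_optimal
    (hadm : ∀ k, u k ∈ Uset ∧ (traj f x₀ u k, u k) ∈ Z)
    (hopt : Vinf f ℓ Z Uset x₀ = ∑' k, ENNReal.ofReal (ℓ (traj f x₀ u k) (u k))) (k : ℕ) :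
    Vinf f ℓ Z Uset (traj f x₀ u k) =
      ENNReal.ofReal (ℓ (traj f x₀ u k) (u k)) + Vinf f ℓ Z Uset (traj f x₀ u (k + 1)) := by
  rw [Vinf_traj_eq_tsum_tail_of_optimal hadm hopt, Vinf_traj_eq_tsum_tail_of_optimal hadm hopt,
    tsum_eq_zero_add' ENNReal.summable]
  simp only [zero_add, add_assoc, add_comm 1 k]

lemma Vinf_le_of_Assumption2 {κ : Vec n → Vec m} {ρ C ε : ℝ} (hℓ0 : ∀ x u, 0 ≤ ℓ x u)
    (hκU : ∀ x, κ x ∈ Uset) (hA2 : Assumption2 f κ ℓ Z Uset ρ C ε) {x : Vec n}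
    (hx : lmin ℓ Uset x ≤ ε) :
    Vinf f ℓ Z Uset x ≤ ENNReal.ofReal (C / (1 - ρ) * lmin ℓ Uset x) := by
  obtain ⟨⟨hρ0, hρ1⟩, hC, -, hdecay⟩ := hA2
  have hlmin := lmin_nonneg (Uset := Uset) hℓ0 x
  have hadm : ∀ k, κ (phiX f κ x k) ∈ Uset ∧
      (traj f x (fun j => κ (phiX f κ x j)) k, κ (phiX f κ x k)) ∈ Z := fun k => by
    rw [traj_phiX]
    exact ⟨hκU _, (hdecay x hx k).2⟩
  calc Vinf f ℓ Z Uset x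
      ≤ ∑' k, ENNReal.ofReal (ℓ (phiX f κ x k) (κ (phiX f κ x k))) := by
        simpa only [traj_phiX] using Vinf_le_tsum hadm
    _ ≤ ∑' k, ENNReal.ofReal (C * lmin ℓ Uset x) * ENNReal.ofReal ρ ^ k := by
        refine ENNReal.tsum_le_tsum fun k => ?_
        rw [← ENNReal.ofReal_pow hρ0, ← ENNReal.ofReal_mul (by positivity)]
        exact ENNReal.ofReal_le_ofReal ((hdecay x hx k).1.trans_eq (by ring))
    _ = ENNReal.ofReal (C * lmin ℓ Uset x) * (1 - ENNReal.ofReal ρ)⁻¹ := by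
        rw [ENNReal.tsum_mul_left, ENNReal.tsum_geometric]
    _ = ENNReal.ofReal (C / (1 - ρ) * lmin ℓ Uset x) := by
        rw [← ENNReal.ofReal_one, ← ENNReal.ofReal_sub _ hρ0,
          ← ENNReal.ofReal_inv_of_pos (by linarith), ← ENNReal.ofReal_mul (by positivity)]
        ring_nf

end ValueFunction

section TailDecay

variable {γ ε : ℝ} {r L : ℕ → ℝ}

lemma le_max_sub_mul_of_tail_step (hγ : 0 ≤ γ) (hL : ∀ k, 0 ≤ L k)
    (hstep : ∀ k, r k = L k + r (k + 1)) (hloc : ∀ k, L k ≤ ε → r k ≤ γ * L k) (k : ℕ) :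
    r k ≤ max (γ * ε) (r 0 - k * ε) := by
  induction k with
  | zero => simp
  | succ k ih =>
    have hk := hstep k
    rcases le_or_gt (r k) (γ * ε) with h | h
    · exact le_max_of_le_left (by linarith [hL k])
    · have hLk : ε < L k := by
        by_contra! hLk
        nlinarith [hloc k hLk]
      have : r k ≤ r 0 - k * ε := (le_max_iff.mp ih).resolve_left h.not_ge
      push_cast
      exact le_max_of_le_right (by linarith)

lemma succ_le_mul_of_tail_step (hγ : 0 < γ) (hstep : ∀ k, r k = L k + r (k + 1))
    (hloc : ∀ k, L k ≤ ε → r k ≤ γ * L k) {k : ℕ} (hk : r k ≤ γ * ε) :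
    r (k + 1) ≤ (γ - 1) / γ * r k := by
  have hLk : r k ≤ γ * L k := by
    by_contra! h
    exact h.not_ge (hloc k (lt_of_mul_lt_mul_left (h.trans_le hk) hγ.le).le)
  rw [div_mul_eq_mul_div, le_div_iff₀ hγ]
  nlinarith [hstep k]

lemma le_pow_mul_min_of_tail_step (hγ : 1 ≤ γ) (hL : ∀ k, 0 ≤ L k)
    (hstep : ∀ k, r k = L k + r (k + 1)) (hloc : ∀ k, L k ≤ ε → r k ≤ γ * L k) {N₀ : ℕ}
    (h0 : r 0 ≤ (γ + N₀) * ε) {N : ℕ} (hN : N₀ ≤ N) :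
    r N ≤ ((γ - 1) / γ) ^ (N - N₀) * min (γ * ε) (r 0) := by
  have hanti : Antitone r := antitone_nat_of_succ_le fun k => by linarith [hstep k, hL k]
  have hN₀ : r N₀ ≤ γ * ε := by
    have := le_max_sub_mul_of_tail_step (by linarith) hL hstep hloc N₀
    exact this.trans (max_le le_rfl (by linarith))
  have hρ : 0 ≤ (γ - 1) / γ := div_nonneg (by linarith) (by linarith)
  obtain ⟨j, rfl⟩ := Nat.exists_eq_add_of_le hN
  rw [Nat.add_sub_cancel_left]
  refine le_trans ?_ (mul_le_mul_of_nonneg_left (le_min hN₀ (hanti (Nat.zero_le N₀)))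
    (pow_nonneg hρ j))
  induction j with
  | zero => simp
  | succ j ih =>
    have hj : r (N₀ + j) ≤ γ * ε := (hanti (Nat.le_add_right N₀ j)).trans hN₀
    calc r (N₀ + (j + 1)) ≤ (γ - 1) / γ * r (N₀ + j) :=
          succ_le_mul_of_tail_step (by linarith) hstep hloc hj
      _ ≤ (γ - 1) / γ * (((γ - 1) / γ) ^ j * r N₀) :=
          mul_le_mul_of_nonneg_left (ih (Nat.le_add_right N₀ j)) hρ
      _ = ((γ - 1) / γ) ^ (j + 1) * r N₀ := by ring

end TailDecay

lemma ENNReal.le_ofReal_pow_mul_min_of_tail_step {γ ε : ℝ} {L : ℕ → ℝ} {V : ℕ → ℝ≥0∞}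
    (hγ : 1 ≤ γ) (hε : 0 ≤ ε) (hL : ∀ k, 0 ≤ L k)
    (hstep : ∀ k, V k = ENNReal.ofReal (L k) + V (k + 1))
    (hloc : ∀ k, L k ≤ ε → V k ≤ ENNReal.ofReal (γ * L k)) {N₀ : ℕ}
    (h0 : V 0 ≤ ENNReal.ofReal ((γ + N₀) * ε)) {N : ℕ} (hN : N₀ ≤ N) :
    V N ≤ ENNReal.ofReal (((γ - 1) / γ) ^ (N - N₀)) * min (ENNReal.ofReal (γ * ε)) (V 0) := by
  have hanti : Antitone V := antitone_nat_of_succ_le fun k => (hstep k).symm ▸ le_add_self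
  have hfin : ∀ k, V k ≠ ∞ := fun k =>
    ne_top_of_le_ne_top ENNReal.ofReal_ne_top ((hanti (Nat.zero_le k)).trans h0)
  have hρ : 0 ≤ (γ - 1) / γ := div_nonneg (by linarith) (by linarith)
  have hdecay := le_pow_mul_min_of_tail_step (r := fun k => (V k).toReal) hγ hL
    (fun k => by
      rw [hstep k, ENNReal.toReal_add ENNReal.ofReal_ne_top (hfin _),
        ENNReal.toReal_ofReal (hL k)])
    (fun k hk => ENNReal.toReal_le_of_le_ofReal (mul_nonneg (by linarith) (hL k)) (hloc k hk))
    (ENNReal.toReal_le_of_le_ofReal (by positivity) h0) hN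
  calc V N = ENNReal.ofReal (V N).toReal := (ENNReal.ofReal_toReal (hfin N)).symm
    _ ≤ ENNReal.ofReal (((γ - 1) / γ) ^ (N - N₀) * min (γ * ε) (V 0).toReal) :=
        ENNReal.ofReal_le_ofReal hdecay
    _ = _ := by
        rw [ENNReal.ofReal_mul (pow_nonneg hρ _), ENNReal.ofReal_min,
          ENNReal.ofReal_toReal (hfin 0)]

theorem infinite_horizon_tail_bound_general {n m : ℕ}
    (f : Vec n → Vec m → Vec n) (κ : Vec n → Vec m) (ℓ : Vec n → Vec m → ℝ)
    (Z : Set (Vec n × Vec m)) (Uset : Set (Vec m)) (ρ C ε : ℝ)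
    (hℓ0 : ∀ x u, 0 ≤ ℓ x u)
    (hκU : ∀ x, κ x ∈ Uset)
    (hA2 : Assumption2 f κ ℓ Z Uset ρ C ε)
    (Vbar γ ργ γlow : ℝ) (hγ : γ = C / (1 - ρ)) (hγ1 : 1 < γ)
    (hργ : ργ = (γ - 1) / γ) (hγlow : γlow = min γ (Vbar / ε))
    (N₀ : ℕ) (hN₀ : N₀ = ⌈max 0 ((Vbar - γ * ε) / ε)⌉₊)
    (x₀ : Vec n) (hx₀ : Vinf f ℓ Z Uset x₀ ≤ ENNReal.ofReal Vbar)
    (uinf : ℕ → Vec m)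
    (hadm : ∀ k, uinf k ∈ Uset ∧ (traj f x₀ uinf k, uinf k) ∈ Z)
    (hoptimal : Vinf f ℓ Z Uset x₀ =
      ∑' k : ℕ, ENNReal.ofReal (ℓ (traj f x₀ uinf k) (uinf k))) :
    ∀ N : ℕ, N₀ ≤ N →
      Vinf f ℓ Z Uset (traj f x₀ uinf N) ≤
        ENNReal.ofReal (ργ ^ (N - N₀)) *
          min (ENNReal.ofReal (γlow * ε)) (Vinf f ℓ Z Uset x₀) := by
  have hε : 0 < ε := hA2.2.2.1
  have hVbar_le : Vbar ≤ (γ + N₀) * ε := by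
    have : (Vbar - γ * ε) / ε ≤ N₀ := hN₀ ▸ (le_max_right _ _).trans (Nat.le_ceil _)
    rw [div_le_iff₀ hε] at this
    linarith
  have hloc : ∀ k, ℓ (traj f x₀ uinf k) (uinf k) ≤ ε →
      Vinf f ℓ Z Uset (traj f x₀ uinf k) ≤ ENNReal.ofReal (γ * ℓ (traj f x₀ uinf k) (uinf k)) :=
    fun k hk =>
      have hlmin := lmin_le hℓ0 (traj f x₀ uinf k) (hadm k).1
      (Vinf_le_of_Assumption2 hℓ0 hκU hA2 (hlmin.trans hk)).trans <|
        ENNReal.ofReal_le_ofReal (hγ ▸ mul_le_mul_of_nonneg_left hlmin (by linarith))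
  intro N hN
  calc Vinf f ℓ Z Uset (traj f x₀ uinf N)
      ≤ ENNReal.ofReal (ργ ^ (N - N₀)) * min (ENNReal.ofReal (γ * ε)) (Vinf f ℓ Z Uset x₀) :=
        hργ ▸ ENNReal.le_ofReal_pow_mul_min_of_tail_step hγ1.le hε.le (fun k => hℓ0 _ _)
          (Vinf_traj_eq_add_Vinf_traj_succ_of_optimal hadm hoptimal) hloc
          (hx₀.trans (ENNReal.ofReal_le_ofReal hVbar_le)) hN
    _ ≤ _ := by
        rw [hγlow, min_mul_of_nonneg _ _ hε.le, div_mul_cancel₀ _ hε.ne', ENNReal.ofReal_min]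
        exact mul_le_mul_right
          (le_min (le_min (min_le_left _ _) ((min_le_right _ _).trans hx₀)) (min_le_right _ _)) _

/-- Theorem 1, Part III, tail bound along the infinite-horizon optimal
trajectory: under Assumption 2 with `γ = C/(1-ρ) > 1`, `ρ_γ = (γ-1)/γ`,
`γ̲ = min {γ, V̄/ε}` and `N₀ = ⌈max {0, (V̄-γε)/ε}⌉`, if `x_∞(·), u_∞(·)` is an
admissible infinite-horizon optimal pair from `x₀` with `V_{∞,0}(x₀) ≤ V̄`, then for
every `N ≥ N₀`, `V_{∞,0}(x_∞(N)) ≤ ρ_γ^(N-N₀) min {γ̲ ε, V_{∞,0}(x₀)}`. -/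
theorem infinite_horizon_tail_bound {n m : ℕ}
    (f : Vec n → Vec m → Vec n) (κ : Vec n → Vec m) (ℓ : Vec n → Vec m → ℝ)
    (Z : Set (Vec n × Vec m)) (Uset : Set (Vec m)) (ρ C ε : ℝ)
    (hf : Continuous fun p : Vec n × Vec m => f p.1 p.2)
    (hℓ : Continuous fun p : Vec n × Vec m => ℓ p.1 p.2) (hℓ0 : ∀ x u, 0 ≤ ℓ x u)
    (hU : IsCompact Uset) (hκ : Continuous κ) (hκU : ∀ x, κ x ∈ Uset)
    (hA2 : Assumption2 f κ ℓ Z Uset ρ C ε)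
    (Vbar γ ργ γlow : ℝ) (hVbar : 0 < Vbar) (hγ : γ = C / (1 - ρ)) (hγ1 : 1 < γ)
    (hργ : ργ = (γ - 1) / γ) (hγlow : γlow = min γ (Vbar / ε))
    (N₀ : ℕ) (hN₀ : N₀ = ⌈max 0 ((Vbar - γ * ε) / ε)⌉₊)
    (x₀ : Vec n) (hx₀ : Vinf f ℓ Z Uset x₀ ≤ ENNReal.ofReal Vbar)
    (uinf : ℕ → Vec m)
    (hadm : ∀ k, uinf k ∈ Uset ∧ (traj f x₀ uinf k, uinf k) ∈ Z)
    (hoptimal : Vinf f ℓ Z Uset x₀ =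
      ∑' k : ℕ, ENNReal.ofReal (ℓ (traj f x₀ uinf k) (uinf k))) :
    ∀ N : ℕ, N₀ ≤ N →
      Vinf f ℓ Z Uset (traj f x₀ uinf N) ≤
        ENNReal.ofReal (ργ ^ (N - N₀)) *
          min (ENNReal.ofReal (γlow * ε)) (Vinf f ℓ Z Uset x₀) :=
  infinite_horizon_tail_bound_general f κ ℓ Z Uset ρ C ε hℓ0 hκU hA2 Vbar γ ργ γlow hγ hγ1 hργ hγlow
    N₀ hN₀ x₀ hx₀ uinf hadm hoptimal
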